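/- arXiv:math-ph/0303047 — 4 statements merged into one kernel-verified Lean document; each statement's English description precedes it below -/
import Mathlib

section
/- Let (Ω, ℱ, ℙ) be a probability space and let (θ_k)_{k∈ℤ} and (α_k)_{k∈ℤ} be random variables with values in the additive circle 𝕋 = ℝ/2πℤ such that the combined family {θ_k : k∈ℤ} ∪ {α_k : k∈ℤ} is mutually independent, the θ_k are identically distributed with the uniform (normalized Haar) distribution on 𝕋, and the α_k are identically distributed (with arbitrary common distribution). Then the random variables η_k := θ_k + θ_{k−1} + α_k − α_{k−1}, k ∈ ℤ, form an independent family and each η_k is uniformly distributed on 𝕋. -/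
/-!
Write `η_a = (θ_{a-1} + α_a - α_{a-1}) + θ_a`. The bracket and every `η_k` with `k < a` are
functions of the family `Y_a` of all the variables other than `θ_a`, and `θ_a` is independent
of `Y_a`.
Since the law of `θ_a` is translation invariant, the shear `(y, x) ↦ (y, g y + x)` preserves
`law(Y_a) ⊗ uniform`, so `η_a` is uniform and independent of `Y_a`, hence of the past
`(η_k)_{k < a}`. Independence of each variable from its past gives mutual independence.
-/

open MeasureTheory ProbabilityTheory

noncomputable instance : Fact (0 < 2 * Real.pi) := ⟨by positivity⟩

/-- The uniform (normalized Haar) probability measure on the additive circle `ℝ/2πℤ`. -/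
noncomputable def uniformCircle : Measure (AddCircle (2 * Real.pi)) :=
  (ENNReal.ofReal (2 * Real.pi))⁻¹ • (volume : Measure (AddCircle (2 * Real.pi)))

instance : uniformCircle.IsAddLeftInvariant := by
  unfold uniformCircle; infer_instance

namespace ProbabilityTheory

variable {Ω : Type*} {mΩ : MeasurableSpace Ω} {P : Measure Ω}

theorem iIndepFun_of_indep_iSup_lt [IsProbabilityMeasure P] {ι : Type*} [LinearOrder ι]
    {β : ι → Type*} {m : ∀ i, MeasurableSpace (β i)} {Z : ∀ i, Ω → β i}
    (h : ∀ a, Indep ((m a).comap (Z a)) (⨆ k < a, (m k).comap (Z k)) P) :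
    iIndepFun Z P := by
  classical
  rw [iIndepFun_iff_measure_inter_preimage_eq_mul]
  intro S E hE
  induction S using Finset.induction_on_max with
  | empty => simp
  | insert a s hlt ih =>
    have hpast : MeasurableSet[⨆ k < a, (m k).comap (Z k)] (⋂ k ∈ s, Z k ⁻¹' E k) :=
      .biInter s.countable_toSet fun k hk =>
        le_iSup₂ (f := fun k (_ : k < a) => (m k).comap (Z k)) k (hlt k hk) _
          ⟨E k, hE k (Finset.mem_insert_of_mem hk), rfl⟩
    rw [Finset.set_biInter_insert,
      (Indep_iff _ _ _).1 (h a) _ _ ⟨E a, hE a (s.mem_insert_self a), rfl⟩ hpast,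
      ih fun k hk => hE k (Finset.mem_insert_of_mem hk),
      Finset.prod_insert fun has => (hlt a has).false]

theorem iIndepFun.indepFun_subtype_ne {ι : Type*} {β : ι → Type*}
    {m : ∀ i, MeasurableSpace (β i)} {F : ∀ i, Ω → β i} (hF : iIndepFun F P)
    (hmeas : ∀ i, Measurable (F i)) (i : ι) :
    IndepFun (F i) (fun ω (j : {j // j ≠ i}) => F j ω) P := by
  rw [IndepFun_iff_Indep]
  have h := indep_iSup_of_disjoint (fun j => (hmeas j).comap_le)
    ((iIndepFun_iff_iIndep _ _ _).1 hF) (disjoint_compl_right (a := ({i} : Set ι)))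
  refine indep_of_indep_of_le_right (indep_of_indep_of_le_left h ?_) ?_
  · exact le_iSup₂ (f := fun j (_ : j ∈ ({i} : Set ι)) => (m j).comap (F j)) i rfl
  · simp only [MeasurableSpace.pi, MeasurableSpace.comap_iSup, MeasurableSpace.comap_comp,
      Function.comp_def]
    exact iSup_le fun j =>
      le_iSup₂ (f := fun j (_ : j ∈ ({i} : Set ι)ᶜ) => (m j).comap (F j)) j.1 j.2

theorem IndepFun.indepFun_comp_add_and_map_eq {G E : Type*} [AddGroup G] [MeasurableSpace G]
    [MeasurableAdd₂ G] [MeasurableSpace E] [IsProbabilityMeasure P] {ν : Measure G}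
    [ν.IsAddLeftInvariant] {Y : Ω → E} {X : Ω → G} (hY : Measurable Y) (hX : Measurable X)
    (hYX : IndepFun Y X P) (hXν : P.map X = ν) {g : E → G} (hg : Measurable g) :
    IndepFun Y (fun ω => g (Y ω) + X ω) P ∧ P.map (fun ω => g (Y ω) + X ω) = ν := by
  have : IsProbabilityMeasure ν := hXν ▸ Measure.isProbabilityMeasure_map hX.aemeasurable
  have hshear : MeasurePreserving (fun p : E × G => (p.1, g p.1 + p.2))
      ((P.map Y).prod ν) ((P.map Y).prod ν) :=
    (MeasurePreserving.id _).skew_product (by fun_prop)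
      (Filter.Eventually.of_forall fun y => map_add_left_eq_self ν (g y))
  have hjoint : P.map (fun ω => (Y ω, g (Y ω) + X ω)) = (P.map Y).prod ν := by
    rw [← hshear.map_eq, ← hXν,
      ← (indepFun_iff_map_prod_eq_prod_map_map hY.aemeasurable hX.aemeasurable).1 hYX,
      Measure.map_map hshear.measurable (hY.prodMk hX)]
    rfl
  have hlaw : P.map (fun ω => g (Y ω) + X ω) = ν := by
    rw [← Function.comp_def Prod.snd (fun ω => (Y ω, g (Y ω) + X ω)),
      ← Measure.map_map measurable_snd (by fun_prop), hjoint, Measure.map_snd_prod,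
      Measure.map_apply hY .univ, Set.preimage_univ, measure_univ, one_smul]
  refine ⟨?_, hlaw⟩
  rw [indepFun_iff_map_prod_eq_prod_map_map hY.aemeasurable (by fun_prop), hjoint, hlaw]

end ProbabilityTheory

theorem eta_iid_uniform_general {Ω : Type*} [MeasureSpace Ω] [IsProbabilityMeasure (ℙ : Measure Ω)]
    (θ α : ℤ → Ω → AddCircle (2 * Real.pi))
    (hθmeas : ∀ k, Measurable (θ k)) (hαmeas : ∀ k, Measurable (α k))
    (hindep : iIndepFun (Sum.elim θ α) ℙ)
    (hθunif : ∀ k, Measure.map (θ k) ℙ = uniformCircle) :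
    iIndepFun
      (fun k ω => θ k ω + θ (k - 1) ω + α k ω - α (k - 1) ω) ℙ ∧
    ∀ k, Measure.map (fun ω => θ k ω + θ (k - 1) ω + α k ω - α (k - 1) ω) ℙ
      = uniformCircle := by
  set η : ℤ → Ω → AddCircle (2 * Real.pi) :=
    fun k ω => θ k ω + θ (k - 1) ω + α k ω - α (k - 1) ω
  have hmeas : ∀ i, Measurable (Sum.elim θ α i) := Sum.rec hθmeas hαmeas
  let Y (a : ℤ) (ω : Ω) (j : {j : ℤ ⊕ ℤ // j ≠ .inl a}) := Sum.elim θ α j ω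
  have hY : ∀ a, Measurable (Y a) := fun a => measurable_pi_lambda _ fun j => hmeas j
  have hη : ∀ a, IndepFun (Y a) (η a) ℙ ∧ Measure.map (η a) ℙ = uniformCircle := by
    intro a
    let g (y : {j : ℤ ⊕ ℤ // j ≠ .inl a} → AddCircle (2 * Real.pi)) :=
      y ⟨.inl (a - 1), by simp⟩ + y ⟨.inr a, by simp⟩ - y ⟨.inr (a - 1), by simp⟩
    have hηa : η a = fun ω => g (Y a ω) + θ a ω := by
      funext ω
      show θ a ω + θ (a - 1) ω + α a ω - α (a - 1) ω = θ (a - 1) ω + α a ω - α (a - 1) ω + θ a ω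
      abel
    rw [hηa]
    exact (hindep.indepFun_subtype_ne hmeas (.inl a)).symm.indepFun_comp_add_and_map_eq (hY a)
      (hθmeas a) (hθunif a) (g := g) (by fun_prop)
  refine ⟨iIndepFun_of_indep_iSup_lt fun a => ?_, fun k => (hη k).2⟩
  refine indep_of_indep_of_le_right ((IndepFun_iff_Indep _ _ _).1 (hη a).1).symm
    (iSup₂_le fun k hk => ?_)
  have hηk : η k = (fun y => y ⟨.inl k, Sum.inl_injective.ne hk.ne⟩
      + y ⟨.inl (k - 1), Sum.inl_injective.ne (by omega)⟩
      + y ⟨.inr k, by simp⟩ - y ⟨.inr (k - 1), by simp⟩) ∘ Y a := rfl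
  rw [hηk, ← MeasurableSpace.comap_comp]
  exact MeasurableSpace.comap_mono (Measurable.comap_le (by fun_prop))

/-- If `(θ_k)_{k∈ℤ}` and `(α_k)_{k∈ℤ}` are random variables with values in the circle
`𝕋 = ℝ/2πℤ` such that the combined family is mutually independent, the `θ_k` are uniformly
distributed on `𝕋` and the `α_k` are identically distributed, then the random variables
`η_k = θ_k + θ_{k-1} + α_k − α_{k-1}` form an independent family, each uniformly
distributed on `𝕋`. -/
theorem eta_iid_uniform {Ω : Type*} [MeasureSpace Ω] [IsProbabilityMeasure (ℙ : Measure Ω)]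
    (θ α : ℤ → Ω → AddCircle (2 * Real.pi))
    (hθmeas : ∀ k, Measurable (θ k)) (hαmeas : ∀ k, Measurable (α k))
    (hindep : iIndepFun (Sum.elim θ α) ℙ)
    (hθunif : ∀ k, Measure.map (θ k) ℙ = uniformCircle)
    (hαid : ∀ k, Measure.map (α k) ℙ = Measure.map (α 0) ℙ) :
    iIndepFun
      (fun k ω => θ k ω + θ (k - 1) ω + α k ω - α (k - 1) ω) ℙ ∧
    ∀ k, Measure.map (fun ω => θ k ω + θ (k - 1) ω + α k ω - α (k - 1) ω) ℙ
      = uniformCircle :=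
  eta_iid_uniform_general θ α hθmeas hαmeas hindep hθunif
end

section
/- For every real number y with y > 1, one has (1/(2π))·∫_{−1}^{1} ln((x−y)²)/√(1−x²) dx + ln 2 = ln(y + √(y²−1)). -/
/-!
Substituting `x = cos θ` turns the integral into `π` times the average of `log ((cos θ - y) ^ 2)`
over the unit circle. For `a = y + √(y ^ 2 - 1)`, the root `> 1` of `a ^ 2 - 2 y a + 1`, one has
`‖e^{iθ} - a‖ ^ 2 = 2 a (y - cos θ)`, so this average is `4 log a - 2 log (2 a)` by the mean value
property of the function `log ‖z - a‖`, harmonic on a neighbourhood of the closed unit disc.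
-/

open MeasureTheory Real Set

theorem integral_Ioo_div_sqrt_one_sub_sq_eq_integral_comp_cos (f : ℝ → ℝ) :
    ∫ x in Ioo (-1 : ℝ) 1, f x / √(1 - x ^ 2) = ∫ θ in Ioo 0 π, f (cos θ) := by
  rw [← integral_Icc_eq_integral_Ioo, ← bijOn_cos.image_eq,
    integral_image_eq_integral_abs_deriv_smul measurableSet_Icc
      (fun θ _ => (hasDerivAt_cos θ).hasDerivWithinAt) injOn_cos,
    integral_Icc_eq_integral_Ioo]
  refine setIntegral_congr_fun measurableSet_Ioo fun θ ⟨h0, hπ⟩ => ?_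
  have hsin : 0 < sin θ := sin_pos_of_pos_of_lt_pi h0 hπ
  have hsqrt : √(1 - cos θ ^ 2) = sin θ := by rw [← sin_sq, sqrt_sq hsin.le]
  rw [smul_eq_mul, abs_neg, abs_of_pos hsin, hsqrt, mul_div_cancel₀ _ hsin.ne']

theorem integral_Ioo_zero_pi_comp_cos_eq_pi_mul_circleAverage {f : ℝ → ℝ}
    (hf : ContinuousOn f (Icc (-1) 1)) :
    ∫ θ in Ioo 0 π, f (cos θ) = π * circleAverage (fun z => f z.re) 0 1 := by
  have hcont : Continuous fun θ => f (cos θ) :=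
    hf.comp_continuous continuous_cos fun θ => ⟨neg_one_le_cos θ, cos_le_one θ⟩
  have hreflect : ∫ θ in π..2 * π, f (cos θ) = ∫ θ in 0..π, f (cos θ) := by
    simpa [cos_sub, two_mul, sub_sub_cancel_left] using
      (intervalIntegral.integral_comp_sub_left (fun θ => f (cos θ)) (2 * π)
        (a := 0) (b := π)).symm
  have hsplit := intervalIntegral.integral_add_adjacent_intervals
    (hcont.intervalIntegrable (μ := volume) 0 π) (hcont.intervalIntegrable π (2 * π))
  rw [circleAverage_def, ← integral_Ioc_eq_integral_Ioo,
    ← intervalIntegral.integral_of_le pi_pos.le]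
  simp only [circleMap_zero, Complex.ofReal_one, one_mul, Complex.exp_ofReal_mul_I_re,
    smul_eq_mul, ← hsplit, hreflect]
  field_simp
  ring

theorem Complex.sq_norm_sub_ofReal (z : ℂ) (a : ℝ) :
    ‖z - a‖ ^ 2 = ‖z‖ ^ 2 - 2 * a * z.re + a ^ 2 := by
  rw [Complex.sq_norm, Complex.sq_norm, Complex.normSq_sub]
  simp only [Complex.normSq_ofReal, Complex.conj_ofReal, Complex.mul_re, Complex.ofReal_re,
    Complex.ofReal_im, mul_zero, sub_zero]
  ring

theorem log_sq_re_sub_eq_of_norm_eq_one {a y : ℝ} (ha : 1 < a) (hay : a ^ 2 + 1 = 2 * y * a)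
    {z : ℂ} (hz : ‖z‖ = 1) :
    log ((z.re - y) ^ 2) = 4 * log ‖z - a‖ - 2 * log (2 * a) := by
  have hdist : ‖z - a‖ ^ 2 = 2 * a * (y - z.re) := by
    rw [Complex.sq_norm_sub_ofReal, hz]; linear_combination hay
  have hpos : 0 < ‖z - a‖ := by
    have := norm_sub_norm_le (a : ℂ) z
    rw [norm_sub_rev, hz, Complex.norm_of_nonneg (by linarith)] at this
    linarith
  have hsq : (z.re - y) ^ 2 = (‖z - a‖ ^ 2 / (2 * a)) ^ 2 := by
    rw [hdist]; field_simp; ring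
  rw [hsq, log_pow, log_div (by positivity) (by positivity), log_pow]
  push_cast
  ring

theorem circleAverage_log_sq_re_sub {a y : ℝ} (ha : 1 < a) (hay : a ^ 2 + 1 = 2 * y * a) :
    circleAverage (fun z => log ((z.re - y) ^ 2)) 0 1 = 2 * log a - 2 * log 2 := by
  have hnorm : ‖(a : ℂ)‖ = a := Complex.norm_of_nonneg (by linarith)
  rw [circleAverage_congr_sphere (f₂ := fun z => (4 : ℝ) • log ‖z - a‖ - 2 * log (2 * a))
      fun z hz => log_sq_re_sub_eq_of_norm_eq_one ha hay (by simpa using hz),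
    circleAverage_fun_sub (circleIntegrable_log_norm_sub_const 1).const_fun_smul
      (circleIntegrable_const _ _ _),
    circleAverage_fun_smul, circleAverage_const,
    circleAverage_log_norm_sub_const₂ (by rwa [hnorm]),
    hnorm, smul_eq_mul, log_mul two_ne_zero (by linarith)]
  ring

theorem add_sqrt_sq_sub_one_sq_add_one {y : ℝ} (hy : 1 ≤ y) :
    (y + √(y ^ 2 - 1)) ^ 2 + 1 = 2 * y * (y + √(y ^ 2 - 1)) := by
  have := sq_sqrt (show 0 ≤ y ^ 2 - 1 by nlinarith)
  linear_combination this

/-- For every real `y > 1`,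
`(1/(2π)) ∫_{−1}^{1} ln((x−y)²)/√(1−x²) dx + ln 2 = ln(y + √(y²−1))`. -/
theorem log_integral_eq_log_sqrt (y : ℝ) (hy : 1 < y) :
    (1 / (2 * Real.pi)) *
        (∫ x in Set.Ioo (-1 : ℝ) 1, Real.log ((x - y) ^ 2) / Real.sqrt (1 - x ^ 2))
      + Real.log 2 = Real.log (y + Real.sqrt (y ^ 2 - 1)) := by
  have ha : 1 < y + √(y ^ 2 - 1) := by linarith [sqrt_nonneg (y ^ 2 - 1)]
  have hcont : ContinuousOn (fun x => log ((x - y) ^ 2)) (Icc (-1) 1) :=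
    ((continuousOn_id.sub continuousOn_const).pow 2).log fun x hx =>
      pow_ne_zero 2 (sub_ne_zero.2 (hx.2.trans_lt hy).ne)
  rw [integral_Ioo_div_sqrt_one_sub_sq_eq_integral_comp_cos,
    integral_Ioo_zero_pi_comp_cos_eq_pi_mul_circleAverage hcont,
    circleAverage_log_sq_re_sub ha (add_sqrt_sq_sub_one_sq_add_one hy.le)]
  field_simp
  ring
end

section
/- Let r, t ∈ (0,1) with r² + t² = 1 and let β ∈ [−arccos(r² − t²), 0]. Then the Lebesgue measure of the set {λ ∈ (−π, π] : arccos(r² − t²·cos(2λ)) > −β} equals 2·arccos((r² − cos β)/t²). In particular the integrated density of states of the free operator satisfies N₀(β) = (1/(2π))·arccos((r² − cos β)/t²) on this interval. -/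
/-!
Since `cos` is strictly decreasing on `[0, π]` with inverse `arccos`, the condition
`arccos (r² − t² cos 2λ) > −β` says `cos 2λ > c` with `c = (r² − cos β)/t² = cos a`,
`a = arccos c`. The set `{λ | cos a < cos 2λ}` is `π`-periodic, so each of the two period
windows `(−π, 0]` and `(0, π]` meets it in a set of the same measure as its part in
`(−π/2, π/2]`, which is the interval `(−a/2, a/2)`.
-/

open MeasureTheory Real Set

theorem Real.cos_lt_cos_iff_abs_lt {a x : ℝ} (ha₀ : 0 ≤ a) (haπ : a ≤ π) (hx : |x| ≤ π) :
    cos a < cos x ↔ |x| < a := by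
  rw [← cos_abs x]
  exact strictAntiOn_cos.lt_iff_gt ⟨ha₀, haπ⟩ ⟨abs_nonneg x, hx⟩

theorem Real.lt_arccos_iff_lt_cos {s x : ℝ} (hs₀ : 0 ≤ s) (hsπ : s ≤ π) (hx₁ : -1 ≤ x)
    (hx₂ : x ≤ 1) : s < arccos x ↔ x < cos s := by
  conv_rhs => rw [← cos_arccos hx₁ hx₂]
  exact (strictAntiOn_cos.lt_iff_gt ⟨arccos_nonneg x, arccos_le_pi x⟩ ⟨hs₀, hsπ⟩).symm

theorem setOf_cos_lt_cos_two_mul_inter_Ioc {a : ℝ} (ha₀ : 0 ≤ a) (haπ : a ≤ π) :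
    {l : ℝ | cos a < cos (2 * l)} ∩ Ioc (-(π / 2)) (-(π / 2) + π) = Ioo (-(a / 2)) (a / 2) := by
  ext l
  constructor
  · rintro ⟨hl, hl₁, hl₂⟩
    have := (cos_lt_cos_iff_abs_lt ha₀ haπ (abs_le.2 ⟨by linarith, by linarith⟩)).1 hl
    rw [abs_lt] at this
    exact ⟨by linarith, by linarith⟩
  · rintro ⟨hl₁, hl₂⟩
    refine ⟨(cos_lt_cos_iff_abs_lt ha₀ haπ (abs_le.2 ⟨by linarith, by linarith⟩)).2
      (abs_lt.2 ⟨by linarith, by linarith⟩), by linarith, by linarith⟩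

theorem volume_setOf_cos_lt_cos_two_mul_inter_Ioc {a : ℝ} (ha₀ : 0 ≤ a) (haπ : a ≤ π) :
    volume ({l : ℝ | cos a < cos (2 * l)} ∩ Ioc (-π) π) = ENNReal.ofReal (2 * a) := by
  set P := {l : ℝ | cos a < cos (2 * l)}
  have hP : MeasurableSet P := (isOpen_lt continuous_const (by fun_prop)).measurableSet
  have hP_periodic : ∀ g : AddSubgroup.zmultiples π, (fun x => g +ᵥ x) ⁻¹' P = P := by
    rintro ⟨_, n, rfl⟩
    ext l
    simp only [P, mem_preimage, mem_ofPred_eq, AddSubgroup.vadd_def, vadd_eq_add, zsmul_eq_mul]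
    rw [show 2 * (n * π + l) = 2 * l + n * (2 * π) by ring, cos_add_int_mul_two_pi]
  have h_window : ∀ t, volume (P ∩ Ioc t (t + π)) = ENNReal.ofReal a := fun t => by
    have := (isAddFundamentalDomain_Ioc pi_pos t).measure_set_eq
      (isAddFundamentalDomain_Ioc pi_pos (-(π / 2))) hP hP_periodic
    rw [this, setOf_cos_lt_cos_two_mul_inter_Ioc ha₀ haπ, volume_Ioo]
    ring_nf
  have h_split : Ioc (-π) π = Ioc (-π) (-π + π) ∪ Ioc 0 (0 + π) := by
    rw [neg_add_cancel, zero_add, Ioc_union_Ioc_eq_Ioc (by linarith [pi_pos]) pi_pos.le]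
  rw [h_split, inter_union_distrib_left, measure_union
    (Disjoint.inter_left' _ (Disjoint.inter_right' _ (Ioc_disjoint_Ioc_of_le (by simp))))
    (hP.inter measurableSet_Ioc), h_window, h_window, ← ENNReal.ofReal_add ha₀ ha₀, two_mul]

section FreeBand

variable {r t s : ℝ}

theorem lt_arccos_free_band_iff (ht : 0 < t) (hrt : r ^ 2 + t ^ 2 = 1) (hs₀ : 0 ≤ s)
    (hsπ : s ≤ π) (l : ℝ) :
    s < arccos (r ^ 2 - t ^ 2 * cos (2 * l)) ↔ (r ^ 2 - cos s) / t ^ 2 < cos (2 * l) := by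
  have hcos := neg_one_le_cos (2 * l)
  have hcos' := cos_le_one (2 * l)
  rw [lt_arccos_iff_lt_cos hs₀ hsπ (by nlinarith) (by nlinarith), div_lt_iff₀ (by positivity)]
  constructor <;> intro h <;> linarith

theorem free_band_level_mem_Icc (ht : 0 < t) (hrt : r ^ 2 + t ^ 2 = 1) (hs₀ : 0 ≤ s)
    (hs : s ≤ arccos (r ^ 2 - t ^ 2)) : (r ^ 2 - cos s) / t ^ 2 ∈ Icc (-1) 1 := by
  have h_cos : r ^ 2 - t ^ 2 ≤ cos s := by
    simpa [cos_arccos (by nlinarith : -1 ≤ r ^ 2 - t ^ 2) (by nlinarith)] using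
      cos_le_cos_of_nonneg_of_le_pi hs₀ (arccos_le_pi _) hs
  have := cos_le_one s
  rw [mem_Icc, le_div_iff₀ (by positivity), div_le_one (by positivity)]
  constructor <;> linarith

end FreeBand

theorem free_ids_formula_general (r t : ℝ)
    (ht : t ∈ Set.Ioo (0 : ℝ) 1) (hrt : r ^ 2 + t ^ 2 = 1) (β : ℝ)
    (hβ : β ∈ Set.Icc (-Real.arccos (r ^ 2 - t ^ 2)) 0) :
    volume {l : ℝ | l ∈ Set.Ioc (-Real.pi) Real.pi ∧
        Real.arccos (r ^ 2 - t ^ 2 * Real.cos (2 * l)) > -β}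
      = ENNReal.ofReal (2 * Real.arccos ((r ^ 2 - Real.cos β) / t ^ 2)) ∧
    (volume {l : ℝ | l ∈ Set.Ioc (-Real.pi) Real.pi ∧
        Real.arccos (r ^ 2 - t ^ 2 * Real.cos (2 * l)) > -β}).toReal / (4 * Real.pi)
      = (1 / (2 * Real.pi)) * Real.arccos ((r ^ 2 - Real.cos β) / t ^ 2) := by
  obtain ⟨hβ₁, hβ₂⟩ := hβ
  have hs₀ : 0 ≤ -β := by linarith
  have hs : -β ≤ arccos (r ^ 2 - t ^ 2) := by linarith
  have hsπ : -β ≤ π := hs.trans (arccos_le_pi _)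
  rw [← cos_neg β]
  obtain ⟨hc₁, hc₂⟩ := free_band_level_mem_Icc ht.1 hrt hs₀ hs
  have h_set : {l : ℝ | l ∈ Ioc (-π) π ∧ arccos (r ^ 2 - t ^ 2 * cos (2 * l)) > -β} =
      {l | cos (arccos ((r ^ 2 - cos (-β)) / t ^ 2)) < cos (2 * l)} ∩ Ioc (-π) π := by
    ext l
    rw [cos_arccos hc₁ hc₂, mem_inter_iff, mem_ofPred_eq, mem_ofPred_eq, gt_iff_lt,
      lt_arccos_free_band_iff ht.1 hrt hs₀ hsπ, and_comm]
  have h_vol := h_set ▸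
    volume_setOf_cos_lt_cos_two_mul_inter_Ioc (arccos_nonneg _) (arccos_le_pi _)
  refine ⟨h_vol, ?_⟩
  rw [h_vol, ENNReal.toReal_ofReal (mul_nonneg zero_le_two (arccos_nonneg _))]
  field_simp
  ring

/-- For `β ∈ [−arccos(r²−t²), 0]`, the Lebesgue measure of
`{λ ∈ (−π, π] : arccos(r² − t²cos 2λ) > −β}` equals `2·arccos((r² − cos β)/t²)`; in
particular the free integrated density of states `N₀(β)`, defined as `(1/4π)` times this
measure, equals `(1/(2π))·arccos((r² − cos β)/t²)`. -/
theorem free_ids_formula (r t : ℝ) (hr : r ∈ Set.Ioo (0 : ℝ) 1)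
    (ht : t ∈ Set.Ioo (0 : ℝ) 1) (hrt : r ^ 2 + t ^ 2 = 1) (β : ℝ)
    (hβ : β ∈ Set.Icc (-Real.arccos (r ^ 2 - t ^ 2)) 0) :
    volume {l : ℝ | l ∈ Set.Ioc (-Real.pi) Real.pi ∧
        Real.arccos (r ^ 2 - t ^ 2 * Real.cos (2 * l)) > -β}
      = ENNReal.ofReal (2 * Real.arccos ((r ^ 2 - Real.cos β) / t ^ 2)) ∧
    (volume {l : ℝ | l ∈ Set.Ioc (-Real.pi) Real.pi ∧
        Real.arccos (r ^ 2 - t ^ 2 * Real.cos (2 * l)) > -β}).toReal / (4 * Real.pi)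
      = (1 / (2 * Real.pi)) * Real.arccos ((r ^ 2 - Real.cos β) / t ^ 2) :=
  free_ids_formula_general r t ht hrt β hβ
end

section
/- For n ≥ 1 and j ∈ ℤ, let C_{n−1}(j) be the set of paths (k₀, k₁, …, k_n) ∈ ℤ^{n+1} with k₀ = 0, k_n = j, and for each m ∈ {0, …, n−1}: k_{m+1} − k_m ∈ {0, 1, −1, 2} if k_m is odd, and k_{m+1} − k_m ∈ {0, 1, −1, −2} if k_m is even. Then C_{n−1}(j) is finite and its cardinality equals the binomial coefficient C(2n−1, j/2 + n) if j is even with −2n ≤ j ≤ 2(n−1), and equals C(2n−1, (j−1)/2 + n) if j is odd with −2n+1 ≤ j ≤ 2n−1. -/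
/-- The set of admissible paths `(k₀ = 0, k₁, …, k_n = j)` in `ℤ`: from an odd site the
allowed steps are `{0, 1, −1, 2}`, from an even site they are `{0, 1, −1, −2}`. -/
def pathsC (n : ℕ) (j : ℤ) : Set (Fin (n + 1) → ℤ) :=
  {p | p 0 = 0 ∧ p (Fin.last n) = j ∧ ∀ m : Fin n,
    (Odd (p m.castSucc) → p m.succ - p m.castSucc ∈ ({0, 1, -1, 2} : Set ℤ)) ∧
    (Even (p m.castSucc) → p m.succ - p m.castSucc ∈ ({0, 1, -1, -2} : Set ℤ))}

/-!
For a bit sequence `b` with counting function `c k = #{i < k | b i}`, the walk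
`m ↦ c (2m) + c (2m - 1) - 2m` has parity `b (2m - 1)` at time `m` and takes the step
`b (2m - 1) + 2 b (2m) + b (2m + 1) - 2`, which is exactly an admissible step. Conversely an
admissible walk `q` recovers `c` as `c (2m) = ⌈q m / 2⌉ + m`, `c (2m - 1) = ⌊q m / 2⌋ + m`. Hence
the `n`-step walks ending at `j` correspond to the bit strings of length `2n` whose last bit is
the parity of `j` and whose first `2n - 1` bits contain `⌊j / 2⌋ + n` ones.
-/

open Finset

lemma Nat.count_eq_count_iff {p q : ℕ → Prop} [DecidablePred p] [DecidablePred q] {N : ℕ} :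
    (∀ k ≤ N, Nat.count p k = Nat.count q k) ↔ ∀ i < N, (p i ↔ q i) := by
  constructor
  · intro h i hi
    have h' := h (i + 1) hi
    rw [Nat.count_succ, Nat.count_succ, h i hi.le] at h'
    split_ifs at h' <;> simp_all
  · intro h k hk
    simp only [Nat.count_eq_card_filter_range]
    exact congrArg card (filter_congr fun i hi => h i ((mem_range.1 hi).trans_le hk))

def IsAdmissibleStep (k l : ℤ) : Prop := k % 2 - 2 ≤ l - k ∧ l - k ≤ k % 2 + 1

lemma isAdmissibleStep_iff (k l : ℤ) :
    IsAdmissibleStep k l ↔ (Odd k → l - k ∈ ({0, 1, -1, 2} : Set ℤ)) ∧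
      (Even k → l - k ∈ ({0, 1, -1, -2} : Set ℤ)) := by
  simp only [IsAdmissibleStep, Int.odd_iff, Int.even_iff, Set.mem_insert_iff, Set.mem_singleton_iff]
  omega

-- At `m = 0` the truncated `2 * m - 1` is `0`, and `Nat.count _ 0 = 0` is what we want there.
def walkOf (b : ℕ → Bool) (m : ℕ) : ℤ :=
  Nat.count (b · = true) (2 * m) + Nat.count (b · = true) (2 * m - 1) - 2 * m

section walkOf

variable (b : ℕ → Bool)

@[simp]
lemma walkOf_zero : walkOf b 0 = 0 := by
  simp [walkOf]

lemma walkOf_add_one (m : ℕ) :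
    walkOf b (m + 1) =
      2 * Nat.count (b · = true) (2 * m + 1) + (if b (2 * m + 1) then 1 else 0) - 2 * (m + 1) := by
  rw [walkOf, show 2 * (m + 1) = 2 * m + 1 + 1 by ring, Nat.count_succ, Nat.add_sub_cancel]
  split_ifs <;> push_cast <;> ring

lemma count_two_mul (m : ℕ) :
    (Nat.count (b · = true) (2 * m) : ℤ) = (walkOf b m + 1) / 2 + m := by
  cases m with
  | zero => simp
  | succ m =>
    rw [walkOf_add_one, show 2 * (m + 1) = 2 * m + 1 + 1 by ring, Nat.count_succ]
    split_ifs <;> push_cast <;> omega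

lemma count_two_mul_sub_one (m : ℕ) :
    (Nat.count (b · = true) (2 * m - 1) : ℤ) = walkOf b m / 2 + m := by
  have := count_two_mul b m
  rw [walkOf] at this ⊢
  omega

lemma isAdmissibleStep_walkOf (m : ℕ) : IsAdmissibleStep (walkOf b m) (walkOf b (m + 1)) := by
  have h₀ := count_two_mul b m
  have h₁ := count_two_mul_sub_one b (m + 1)
  rw [show 2 * (m + 1) - 1 = 2 * m + 1 by omega, Nat.count_succ] at h₁
  unfold IsAdmissibleStep
  split_ifs at h₁ <;> push_cast at h₁ <;> omega

end walkOf

lemma walkOf_eq_walkOf_iff {b b' : ℕ → Bool} {n : ℕ} :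
    (∀ m ≤ n, walkOf b m = walkOf b' m) ↔ ∀ i < 2 * n, b i = b' i := by
  rw [forall₂_congr fun _ _ => Bool.eq_iff_iff, ← Nat.count_eq_count_iff]
  constructor
  · intro h k hk
    obtain ⟨m, rfl | rfl⟩ := Nat.even_or_odd' k
    · have := count_two_mul b m
      rw [h m (by omega), ← count_two_mul b' m] at this
      exact_mod_cast this
    · have := count_two_mul_sub_one b (m + 1)
      rw [h (m + 1) (by omega), ← count_two_mul_sub_one b' (m + 1),
        show 2 * (m + 1) - 1 = 2 * m + 1 by omega] at this
      exact_mod_cast this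
  · intro h m hm
    simp only [walkOf, h (2 * m) (by omega), h (2 * m - 1) (by omega)]

/- Bit `2m` records whether the counting function rises from `(q m + 1) / 2 + m` to
`q (m + 1) / 2 + m + 1`; bit `2m + 1` is the parity of `q (m + 1)`. -/
def bitsOf (q : ℕ → ℤ) (k : ℕ) : Bool :=
  if k % 2 = 0 then (q (k / 2) + 1) / 2 ≤ q (k / 2 + 1) / 2 else q ((k + 1) / 2) % 2 = 1

lemma bitsOf_two_mul (q : ℕ → ℤ) (m : ℕ) :
    bitsOf q (2 * m) = decide ((q m + 1) / 2 ≤ q (m + 1) / 2) := by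
  simp [bitsOf]

lemma bitsOf_two_mul_add_one (q : ℕ → ℤ) (m : ℕ) :
    bitsOf q (2 * m + 1) = decide (q (m + 1) % 2 = 1) := by
  simp [bitsOf, show (2 * m + 1 + 1) / 2 = m + 1 by omega]

lemma walkOf_bitsOf {q : ℕ → ℤ} (h₀ : q 0 = 0) (hq : ∀ m, IsAdmissibleStep (q m) (q (m + 1))) :
    walkOf (bitsOf q) = q := by
  funext m
  induction m with
  | zero => simp [h₀]
  | succ m ih =>
    have hc := count_two_mul (bitsOf q) m
    have hs := hq m
    rw [ih] at hc
    rw [walkOf_add_one, Nat.count_succ, bitsOf_two_mul, bitsOf_two_mul_add_one]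
    unfold IsAdmissibleStep at hs
    simp only [decide_eq_true_eq]
    split_ifs <;> push_cast <;> omega

lemma mem_pathsC_iff {n : ℕ} {j : ℤ} {p : Fin (n + 1) → ℤ} :
    p ∈ pathsC n j ↔
      p 0 = 0 ∧ p (Fin.last n) = j ∧ ∀ m : Fin n, IsAdmissibleStep (p m.castSucc) (p m.succ) := by
  simp only [pathsC, isAdmissibleStep_iff, Set.mem_ofPred_eq]

def pathOf (n : ℕ) (j : ℤ) (u : Finset ℕ) (m : Fin (n + 1)) : ℤ :=
  walkOf (fun i => decide (i ∈ u ∨ i = 2 * n - 1 ∧ Odd j)) m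

section pathOf

variable {n : ℕ} {j : ℤ}

lemma pathOf_last (hn : 1 ≤ n) {u : Finset ℕ} (hu : u ⊆ range (2 * n - 1)) :
    pathOf n j u (Fin.last n) = 2 * #u + j % 2 - 2 * n := by
  obtain ⟨k, rfl⟩ := Nat.exists_eq_add_of_le' hn
  have hfilter : {i ∈ range (2 * k + 1) | i ∈ u ∨ i = 2 * k + 1 ∧ j % 2 = 1} = u := by
    ext i
    simp only [mem_filter, mem_range]
    constructor
    · rintro ⟨hi, h | ⟨rfl, -⟩⟩
      exacts [h, absurd hi (lt_irrefl _)]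
    · exact fun h => ⟨mem_range.1 (hu h), Or.inl h⟩
  have hlast : 2 * k + 1 ∉ u := fun h => by have := mem_range.1 (hu h); omega
  rw [pathOf, Fin.val_last, walkOf_add_one, Nat.count_eq_card_filter_range]
  simp only [decide_eq_true_eq, show 2 * (k + 1) - 1 = 2 * k + 1 by omega, true_and,
    Int.odd_iff, hlast, false_or]
  rw [hfilter]
  split_ifs <;> omega

lemma pathOf_mem (hn : 1 ≤ n) {u : Finset ℕ} (hu : u ⊆ range (2 * n - 1))
    (hcard : (#u : ℤ) = j / 2 + n) : pathOf n j u ∈ pathsC n j := by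
  refine mem_pathsC_iff.2 ⟨walkOf_zero _, ?_, fun m => isAdmissibleStep_walkOf _ m⟩
  rw [pathOf_last hn hu]
  omega

lemma injOn_pathOf : Set.InjOn (pathOf n j) {u | u ⊆ range (2 * n - 1)} := by
  intro u hu v hv huv
  have hbits := walkOf_eq_walkOf_iff.1 fun m hm => congrFun huv ⟨m, Nat.lt_succ_of_le hm⟩
  ext i
  by_cases hi : i < 2 * n - 1
  · simpa [hi.ne] using hbits i (by omega)
  · exact iff_of_false (fun h => hi (mem_range.1 (hu h))) (fun h => hi (mem_range.1 (hv h)))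

lemma exists_pathOf_eq (hn : 1 ≤ n) {p : Fin (n + 1) → ℤ} (hp : p ∈ pathsC n j) :
    ∃ u ⊆ range (2 * n - 1), (#u : ℤ) = j / 2 + n ∧ pathOf n j u = p := by
  obtain ⟨hp₀, hpj, hstep⟩ := mem_pathsC_iff.1 hp
  set q : ℕ → ℤ := fun m => p (Fin.clamp m n)
  have hq : ∀ m : Fin (n + 1), q m = p m := fun m =>
    congrArg p (Fin.ext (by simp [Fin.clamp, m.is_le]))
  have hwalk : walkOf (bitsOf q) = q := by
    refine walkOf_bitsOf (hq 0 ▸ hp₀) fun m => ?_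
    by_cases hm : m < n
    · simpa [← hq] using hstep ⟨m, hm⟩
    · have : q m = q (m + 1) := congrArg p (Fin.ext (by simp [Fin.clamp]; omega))
      rw [this, IsAdmissibleStep]
      omega
  have hqn : q n = j := by simpa [hpj] using hq (Fin.last n)
  have hlast : bitsOf q (2 * n - 1) = decide (j % 2 = 1) := by
    obtain ⟨k, rfl⟩ := Nat.exists_eq_add_of_le' hn
    rw [show 2 * (k + 1) - 1 = 2 * k + 1 by omega, bitsOf_two_mul_add_one, hqn]
  refine ⟨{i ∈ range (2 * n - 1) | bitsOf q i}, filter_subset _ _, ?_, ?_⟩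
  · rw [← Nat.count_eq_card_filter_range, count_two_mul_sub_one, hwalk, hqn]
  · have hbits : ∀ i < 2 * n,
        decide (i ∈ {i ∈ range (2 * n - 1) | bitsOf q i} ∨ i = 2 * n - 1 ∧ Odd j) = bitsOf q i := by
      intro i hi
      by_cases hi' : i < 2 * n - 1
      · simp [hi', hi'.ne]
      · obtain rfl : i = 2 * n - 1 := by omega
        simp [hlast, Int.odd_iff]
    funext m
    rw [pathOf, walkOf_eq_walkOf_iff.2 hbits m m.is_le, hwalk, hq]

end pathOf

lemma pathsC_eq_image {n : ℕ} (hn : 1 ≤ n) (j : ℤ) :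
    pathsC n j = pathOf n j '' ↑{u ∈ (range (2 * n - 1)).powerset | (#u : ℤ) = j / 2 + n} := by
  ext p
  simp only [Set.mem_image, coe_filter, mem_powerset, Set.mem_ofPred_eq]
  constructor
  · intro hp
    obtain ⟨u, hu, hcard, rfl⟩ := exists_pathOf_eq hn hp
    exact ⟨u, ⟨hu, hcard⟩, rfl⟩
  · rintro ⟨u, ⟨hu, hcard⟩, rfl⟩
    exact pathOf_mem hn hu hcard

lemma ncard_pathsC {n : ℕ} (hn : 1 ≤ n) {j : ℤ} (hj : -(2 * (n : ℤ)) ≤ j) :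
    (pathsC n j).ncard = (2 * n - 1).choose (j / 2 + n).toNat := by
  have hfilter : {u ∈ (range (2 * n - 1)).powerset | (#u : ℤ) = j / 2 + n} =
      powersetCard (j / 2 + n).toNat (range (2 * n - 1)) := by
    rw [powersetCard_eq_filter]
    exact filter_congr fun u _ => by omega
  rw [pathsC_eq_image hn, Set.InjOn.ncard_image (injOn_pathOf.mono fun u hu => ?_),
    Set.ncard_coe_finset, hfilter, card_powersetCard, card_range]
  simpa using (mem_filter.1 hu).1

/-- The set `C_{n−1}(j)` of admissible paths of `n` steps from `0` to `j` is finite, and its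
cardinality is `C(2n−1, j/2 + n)` for even `j` with `−2n ≤ j ≤ 2(n−1)`, and
`C(2n−1, (j−1)/2 + n)` for odd `j` with `−2n+1 ≤ j ≤ 2n−1`. -/
theorem pathsC_card (n : ℕ) (hn : 1 ≤ n) (j : ℤ) :
    (pathsC n j).Finite ∧
    (Even j → -(2 * (n : ℤ)) ≤ j → j ≤ 2 * (n : ℤ) - 2 →
      (pathsC n j).ncard = Nat.choose (2 * n - 1) (j / 2 + (n : ℤ)).toNat) ∧
    (Odd j → -(2 * (n : ℤ)) + 1 ≤ j → j ≤ 2 * (n : ℤ) - 1 →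
      (pathsC n j).ncard = Nat.choose (2 * n - 1) ((j - 1) / 2 + (n : ℤ)).toNat) := by
  refine ⟨pathsC_eq_image hn j ▸ Set.toFinite _, fun _ hj _ => ncard_pathsC hn hj,
    fun hodd hj _ => ?_⟩
  have : (j - 1) / 2 = j / 2 := by have := Int.odd_iff.1 hodd; omega
  rw [this, ncard_pathsC hn (by omega)]
end
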